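/- Let K ≥ 2. Define L_pandora(r) := 3 - 2r for 0 < r ≤ 1 and L_pandora(r) := r^{-2} for r > 1, and for p in the interior of the simplex Δ^{K-1} and a class i, S_pandora(p, i) := (1/(3(K-1))) Σ_{j ≠ i} L_pandora(p_i / p_j). Then S_pandora is strictly proper: for every π in the interior of the simplex, the Bayes risk Σ_i π_i S_pandora(p, i) over p in the interior of the simplex is uniquely minimized at p = π. -/

import Mathlib

/-- The Pandora pairwise loss: `L(r) = 3 - 2r` for `r ≤ 1` and `r⁻²` for `r > 1`. -/
noncomputable def Lpandora (r : ℝ) : ℝ :=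
  if r ≤ 1 then 3 - 2 * r else r ^ (-(2 : ℝ))

/-- Pandora's Regret: `S(p, i) = (1/(3(K-1))) Σ_{j ≠ i} L_pandora(p i / p j)`. -/
noncomputable def Spandora {K : ℕ} (p : Fin K → ℝ) (i : Fin K) : ℝ :=
  (1 / (3 * ((K : ℝ) - 1))) *
    ∑ j ∈ Finset.univ.filter (fun j => j ≠ i), Lpandora (p i / p j)

lemma Lp_le {r : ℝ} (h : r ≤ 1) : Lpandora r = 3 - 2 * r := if_pos h

lemma Lp_gt {r : ℝ} (h : 1 < r) : Lpandora r = (r ^ 2)⁻¹ := by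
  rw [Lpandora, if_neg (not_le.2 h)]
  rw [Real.rpow_neg (by linarith), show ((2:ℝ)) = ((2:ℕ):ℝ) by norm_num,
    Real.rpow_natCast]

lemma keyLt' (a b r : ℝ) (ha : 0 < a) (hb : 0 < b) (hab : a ≤ b) (hr : 0 < r)
    (hne : r ≠ a / b) :
    a * Lpandora (a / b) + b * Lpandora (b / a) < a * Lpandora r + b * Lpandora r⁻¹ := by
  have minval : a * Lpandora (a / b) + b * Lpandora (b / a) = 3 * a - a ^ 2 / b := by
    rcases eq_or_lt_of_le hab with heq | hlt
    · subst heq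
      rw [div_self ha.ne', Lp_le le_rfl]
      field_simp
      ring
    · rw [Lp_le ((div_le_one hb).2 hab), Lp_gt ((one_lt_div ha).2 hlt)]
      field_simp
      ring
  rw [minval]
  rcases le_or_gt r 1 with hr1 | hr1
  · have hL1 : Lpandora r = 3 - 2 * r := Lp_le hr1
    have hL2 : Lpandora r⁻¹ = r ^ 2 := by
      rcases eq_or_lt_of_le hr1 with h | h
      · rw [h]; norm_num [Lpandora]
      · rw [Lp_gt ((one_lt_inv₀ hr).2 h), inv_pow, inv_inv]
    rw [hL1, hL2]
    have hbr : b * r - a ≠ 0 := by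
      intro h
      exact hne ((eq_div_iff hb.ne').2 (by linarith [mul_comm b r]))
    have hkey : 3 * a - a ^ 2 / b + (b * r - a) ^ 2 / b = a * (3 - 2 * r) + b * r ^ 2 := by
      field_simp
      ring
    have hpos : 0 < (b * r - a) ^ 2 / b := by positivity
    linarith
  · have hL1 : Lpandora r = (r ^ 2)⁻¹ := Lp_gt hr1
    have hs0 : 0 < r⁻¹ := inv_pos.2 hr
    have hs1 : r⁻¹ < 1 := inv_lt_one_of_one_lt₀ hr1
    have hL2 : Lpandora r⁻¹ = 3 - 2 * r⁻¹ := Lp_le hs1.le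
    rw [hL1, hL2]
    have e3 : (r ^ 2)⁻¹ = (r⁻¹) ^ 2 := (inv_pow r 2).symm
    rw [e3]
    have e1 : a + b - (3 * a - a ^ 2 / b) = (a - b) ^ 2 / b := by field_simp; ring
    have e1' : 0 ≤ (a - b) ^ 2 / b := by positivity
    have e2 : a + b < a * (r⁻¹) ^ 2 + b * (3 - 2 * r⁻¹) := by
      nlinarith [mul_pos (sub_pos.2 hs1) (show 0 < 2 * b - a * (1 + r⁻¹) by nlinarith)]
    linarith

lemma keyLt (a b r : ℝ) (ha : 0 < a) (hb : 0 < b) (hr : 0 < r) (hne : r ≠ a / b) :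
    a * Lpandora (a / b) + b * Lpandora (b / a) < a * Lpandora r + b * Lpandora r⁻¹ := by
  rcases le_total a b with hab | hab
  · exact keyLt' a b r ha hb hab hr hne
  · have hne' : r⁻¹ ≠ b / a := by
      intro h
      exact hne (by rw [← inv_inv r, h, inv_div])
    have := keyLt' b a r⁻¹ hb ha hab (inv_pos.2 hr) hne'
    rw [inv_inv] at this
    linarith

lemma keyLe (a b r : ℝ) (ha : 0 < a) (hb : 0 < b) (hr : 0 < r) :
    a * Lpandora (a / b) + b * Lpandora (b / a) ≤ a * Lpandora r + b * Lpandora r⁻¹ := by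
  rcases eq_or_ne r (a / b) with rfl | h
  · rw [inv_div]
  · exact (keyLt a b r ha hb hr h).le

lemma swap_sum {K : ℕ} (f : Fin K → Fin K → ℝ) :
    ∑ i, ∑ j ∈ Finset.univ.filter (fun j => j ≠ i), f i j
      = ∑ i, ∑ j ∈ Finset.univ.filter (fun j => j ≠ i), f j i := by
  simp only [Finset.sum_filter]
  rw [Finset.sum_comm]
  refine Finset.sum_congr rfl fun i _ => Finset.sum_congr rfl fun j _ => ?_
  simp [ne_comm]


/-- **Strict propriety of Pandora's Regret.** For `K ≥ 2` and every true label
distribution `π` in the interior of the simplex, the Bayes risk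
`Σ_i π_i S_pandora(p, i)` over forecasts `p` in the interior of the simplex is
uniquely minimized at `p = π`. -/
theorem pandora_strictly_proper (K : ℕ) (hK : 2 ≤ K)
    (π : Fin K → ℝ) (hπ : ∀ k, 0 < π k) (hπs : ∑ k, π k = 1)
    (p : Fin K → ℝ) (hp : ∀ k, 0 < p k) (hps : ∑ k, p k = 1) (hne : p ≠ π) :
    ∑ i, π i * Spandora π i < ∑ i, π i * Spandora p i := by
  simp only [Spandora]
  set c : ℝ := 1 / (3 * ((K : ℝ) - 1)) with hc_def
  have hK2 : (2 : ℝ) ≤ (K : ℝ) := by exact_mod_cast hK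
  have hc : 0 < c := by rw [hc_def]; apply div_pos one_pos; linarith
  -- expand
  have expand : ∀ q : Fin K → ℝ,
      (∑ i, π i * (c * ∑ j ∈ Finset.univ.filter (fun j => j ≠ i), Lpandora (q i / q j)))
      = c * ∑ i, ∑ j ∈ Finset.univ.filter (fun j => j ≠ i), π i * Lpandora (q i / q j) := by
    intro q
    rw [Finset.mul_sum]
    refine Finset.sum_congr rfl fun i _ => ?_
    rw [← Finset.mul_sum]
    ring
  rw [expand π, expand p]
  refine mul_lt_mul_of_pos_left ?_ hc
  -- F q := ∑ i ∑ j≠i, π i * L (q i / q j)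
  set F : (Fin K → ℝ) → ℝ :=
    fun q => ∑ i, ∑ j ∈ Finset.univ.filter (fun j => j ≠ i), π i * Lpandora (q i / q j)
    with hF
  show F π < F p
  have double : ∀ q : Fin K → ℝ, 2 * F q
      = ∑ i, ∑ j ∈ Finset.univ.filter (fun j => j ≠ i),
          (π i * Lpandora (q i / q j) + π j * Lpandora (q j / q i)) := by
    intro q
    have hswap := swap_sum (fun i j => π i * Lpandora (q i / q j))
    simp only [Finset.sum_add_distrib]
    rw [← hswap, hF]
    ring
  have key : (∑ i, ∑ j ∈ Finset.univ.filter (fun j => j ≠ i),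
        (π i * Lpandora (π i / π j) + π j * Lpandora (π j / π i)))
      < ∑ i, ∑ j ∈ Finset.univ.filter (fun j => j ≠ i),
        (π i * Lpandora (p i / p j) + π j * Lpandora (p j / p i)) := by
    -- witness pair
    have hw : ∃ i j, i ≠ j ∧ p i * π j ≠ π i * p j := by
      by_contra h
      push_neg at h
      apply hne
      funext i
      have h1 : p i = ∑ j, p i * π j := by rw [← Finset.mul_sum, hπs, mul_one]
      have h2 : ∑ j, p i * π j = ∑ j, π i * p j := by
        refine Finset.sum_congr rfl fun j _ => ?_
        rcases eq_or_ne i j with rfl | hij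
        · ring
        · exact h i j hij
      have h3 : ∑ j, π i * p j = π i := by rw [← Finset.mul_sum, hps, mul_one]
      rw [h1, h2, h3]
    obtain ⟨i₀, j₀, hij₀, hcross⟩ := hw
    have termLe : ∀ (i j : Fin K),
        π i * Lpandora (π i / π j) + π j * Lpandora (π j / π i)
          ≤ π i * Lpandora (p i / p j) + π j * Lpandora (p j / p i) := by
      intro i j
      have := keyLe (π i) (π j) (p i / p j) (hπ i) (hπ j) (div_pos (hp i) (hp j))
      rwa [inv_div] at this
    refine Finset.sum_lt_sum (fun i _ => Finset.sum_le_sum fun j _ => termLe i j)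
      ⟨i₀, Finset.mem_univ i₀, ?_⟩
    refine Finset.sum_lt_sum (fun j _ => termLe i₀ j) ⟨j₀, ?_, ?_⟩
    · simp [Ne.symm hij₀]
    · have hrne : p i₀ / p j₀ ≠ π i₀ / π j₀ := by
        intro heq
        exact hcross ((div_eq_div_iff (hp j₀).ne' (hπ j₀).ne').1 heq)
      have := keyLt (π i₀) (π j₀) (p i₀ / p j₀) (hπ i₀) (hπ j₀) (div_pos (hp i₀) (hp j₀)) hrne
      rwa [inv_div] at this
  linarith [key, double π, double p]
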